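/- Lemma 1. Assume J¹ ≠ 0 and hˣ ≠ 0. Let k₁ be an integer with 2 ≤ k₁ and 2·k₁ ≤ L, and let Q be a k₁-candidate. Then the expansion coefficient c_A of Q vanishes for every (k₁,ℓ₂)-support Pauli product A of type ii-b that contains the Pauli operator X at some site of its non-Z edge, for every ℓ₂ ∈ {1,...,L} and every position of its bounding box. -/

import Mathlib

open scoped Classical

namespace Ising2D

/-- Single-site Pauli operators (including the identity). -/
inductive PauliOp : Type
  | I : PauliOp
  | X : PauliOp
  | Y : PauliOp
  | Z : PauliOp
  deriving DecidableEq

/-- The 2×2 matrices of the single-site Pauli operators. -/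
noncomputable def pauliMat : PauliOp → Matrix (Fin 2) (Fin 2) ℂ
  | PauliOp.I => 1
  | PauliOp.X => !![0, 1; 1, 0]
  | PauliOp.Y => !![0, -Complex.I; Complex.I, 0]
  | PauliOp.Z => !![1, 0; 0, -1]

/-- Sites of the two-dimensional periodic lattice `Λ = (ℤ/L)²`. -/
abbrev Site (L : ℕ) := ZMod L × ZMod L

variable {L : ℕ}

/-- The matrix (on `⨂_{r ∈ Λ} ℂ²`, realized as matrices indexed by spin
configurations `Λ → Fin 2`) of the Pauli product `∏_r A_r`. -/
noncomputable def pauliProd [NeZero L] (A : Site L → PauliOp) :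
    Matrix (Site L → Fin 2) (Site L → Fin 2) ℂ :=
  fun s t => ∏ p : Site L, pauliMat (A p) (s p) (t p)

/-- The (unique) expansion coefficient of an operator `Q` on the Pauli product `A`,
obtained from the trace inner product (Pauli products form an orthogonal basis with
`Tr (P_A P_B) = 2^|Λ| δ_{A,B}`). -/
noncomputable def coeff [NeZero L] (Q : Matrix (Site L → Fin 2) (Site L → Fin 2) ℂ)
    (A : Site L → PauliOp) : ℂ :=
  Matrix.trace (pauliProd A * Q) / 2 ^ Fintype.card (Site L)

/-- The Pauli product acting as `P` at site `r` and trivially elsewhere. -/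
def singleSite (r : Site L) (P : PauliOp) : Site L → PauliOp :=
  fun p => if p = r then P else PauliOp.I

/-- The Pauli product acting as `Z` at the two sites `r, s` and trivially elsewhere. -/
def twoSiteZZ (r s : Site L) : Site L → PauliOp :=
  fun p => if p = r ∨ p = s then PauliOp.Z else PauliOp.I

/-- The Hamiltonian
`H = Σ_r (J¹ Z_r Z_{r+e₁} + J² Z_r Z_{r+e₂} + hˣ X_r + h^z Z_r)`. -/
noncomputable def ham [NeZero L] (J1 J2 hx hz : ℝ) :
    Matrix (Site L → Fin 2) (Site L → Fin 2) ℂ :=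
  ∑ r : Site L,
    ((J1 : ℂ) • pauliProd (twoSiteZZ r (r.1 + 1, r.2))
      + (J2 : ℂ) • pauliProd (twoSiteZZ r (r.1, r.2 + 1))
      + (hx : ℂ) • pauliProd (singleSite r PauliOp.X)
      + (hz : ℂ) • pauliProd (singleSite r PauliOp.Z))

/-- `A` is an `(ℓ₁,ℓ₂)`-support Pauli product with (minimal) bounding box cornered
at `r`: its support is contained in the box
`{r₁,...,r₁+ℓ₁−1} × {r₂,...,r₂+ℓ₂−1}` and it acts nontrivially at some site on each
of the four edges of the box. -/
def IsSupportedAt (A : Site L → PauliOp) (r : Site L) (ℓ₁ ℓ₂ : ℕ) : Prop :=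
  (∀ p : Site L, A p ≠ PauliOp.I →
      (∃ n : ℕ, n < ℓ₁ ∧ p.1 = r.1 + (n : ZMod L)) ∧
      (∃ n : ℕ, n < ℓ₂ ∧ p.2 = r.2 + (n : ZMod L))) ∧
  (∃ p : Site L, A p ≠ PauliOp.I ∧ p.1 = r.1) ∧
  (∃ p : Site L, A p ≠ PauliOp.I ∧ p.1 = r.1 + ((ℓ₁ - 1 : ℕ) : ZMod L)) ∧
  (∃ p : Site L, A p ≠ PauliOp.I ∧ p.2 = r.2) ∧
  (∃ p : Site L, A p ≠ PauliOp.I ∧ p.2 = r.2 + ((ℓ₂ - 1 : ℕ) : ZMod L))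

/-- `A` is an `(ℓ₁,ℓ₂)`-support Pauli product. -/
def IsSupportOp (ℓ₁ ℓ₂ : ℕ) (A : Site L → PauliOp) : Prop :=
  ∃ r : Site L, IsSupportedAt A r ℓ₁ ℓ₂

/-- `Q` is a `(k₁,k₂)`-local conserved quantity: it commutes with `H`, it is a linear
combination of `(ℓ₁,ℓ₂)`-support Pauli products with `ℓ₁ ≤ k₁`, `ℓ₂ ≤ k₂`, and the
maximal `ℓ₁` (resp. `ℓ₂`) occurring with nonzero coefficient equals `k₁` (resp. `k₂`). -/
def IsLocalConserved [NeZero L] (J1 J2 hx hz : ℝ) (k₁ k₂ : ℕ)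
    (Q : Matrix (Site L → Fin 2) (Site L → Fin 2) ℂ) : Prop :=
  Q * ham (L := L) J1 J2 hx hz = ham (L := L) J1 J2 hx hz * Q ∧
  (∀ A, coeff Q A ≠ 0 → ∃ ℓ₁ ℓ₂ : ℕ, ℓ₁ ≤ k₁ ∧ ℓ₂ ≤ k₂ ∧ IsSupportOp ℓ₁ ℓ₂ A) ∧
  (∃ A ℓ₂, coeff Q A ≠ 0 ∧ ℓ₂ ≤ k₂ ∧ IsSupportOp k₁ ℓ₂ A) ∧
  (∃ A ℓ₁, coeff Q A ≠ 0 ∧ ℓ₁ ≤ k₁ ∧ IsSupportOp ℓ₁ k₂ A)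

/-- `Q` is a `k₁`-candidate: it commutes with `H` and is a linear combination of
`(ℓ₁,ℓ₂)`-support Pauli products with `ℓ₁ ≤ k₁` (`ℓ₂ ≤ L` arbitrary). -/
def IsCandidate [NeZero L] (J1 J2 hx hz : ℝ) (k₁ : ℕ)
    (Q : Matrix (Site L → Fin 2) (Site L → Fin 2) ℂ) : Prop :=
  Q * ham (L := L) J1 J2 hx hz = ham (L := L) J1 J2 hx hz * Q ∧
  ∀ A, coeff Q A ≠ 0 → ∃ ℓ₁ ℓ₂ : ℕ, ℓ₁ ≤ k₁ ∧ ℓ₂ ≤ L ∧ IsSupportOp ℓ₁ ℓ₂ A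

/-- First coordinate of the upper edge of a box cornered at `r`. -/
def upperEdge (r : Site L) : ZMod L := r.1

/-- First coordinate of the lower edge of a box cornered at `r` with height `ℓ₁`. -/
def lowerEdge (r : Site L) (ℓ₁ : ℕ) : ZMod L := r.1 + ((ℓ₁ - 1 : ℕ) : ZMod L)

/-- `A` contains `X` or `Y` at some site with first coordinate `a`. -/
def HasXYOn (A : Site L → PauliOp) (a : ZMod L) : Prop :=
  ∃ p : Site L, p.1 = a ∧ (A p = PauliOp.X ∨ A p = PauliOp.Y)

/-- Every operator of `A` at sites with first coordinate `a` is `Z` or `I`. -/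
def AllZIOn (A : Site L → PauliOp) (a : ZMod L) : Prop :=
  ∀ p : Site L, p.1 = a → A p = PauliOp.Z ∨ A p = PauliOp.I

/-- `A` carries at least two `Z`'s on the line with first coordinate `a`. -/
def TwoZOn (A : Site L → PauliOp) (a : ZMod L) : Prop :=
  ∃ p q : Site L, p ≠ q ∧ p.1 = a ∧ q.1 = a ∧ A p = PauliOp.Z ∧ A q = PauliOp.Z

/-- `A` carries exactly one `Z` on the line with first coordinate `a`. -/
def OneZOn (A : Site L → PauliOp) (a : ZMod L) : Prop :=
  ∃! p : Site L, p.1 = a ∧ A p = PauliOp.Z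

/-- The single-column Pauli product with `P` at site `r`, `R` at site `r+(k−1)e₁`,
`X` at sites `r+n e₁` for `n = 1,...,k−2`, and `I` elsewhere. -/
noncomputable def colPQ (P R : PauliOp) (k : ℕ) (r : Site L) : Site L → PauliOp :=
  fun p =>
    if p = r then P
    else if p = (r.1 + ((k - 1 : ℕ) : ZMod L), r.2) then R
    else if ∃ n : ℕ, 1 ≤ n ∧ n ≤ k - 2 ∧ p = (r.1 + (n : ZMod L), r.2) then PauliOp.X
    else PauliOp.I

/-!
The coefficient of a Pauli product `B` in `[Q, H] = 0` is a sum, over the terms `h` of `H`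
anticommuting with `B`, of multiples of the coefficient of `Q` on `B·h`. A `k₁`-candidate has no
Pauli product acting on two rows `k₁` apart (this is where `2k₁ ≤ L` enters), so for a
well-chosen `B` a single summand survives and its coefficient must vanish.

First, a product `D` on `k₁` consecutive rows with `X` or `Y` on both edge rows has vanishing
coefficient: take `B` equal to `D` with one more `Z` at an `X`/`Y` site `p` of the upper edge and
one at the site just above `p`; only the coupling `J¹ Z Z` between these two sites survives, and
it gives back `D`. Then, for `A` as in the lemma, replace the `Z` of the `Z` edge by `Y`: only
the field `hˣ X` at that site survives and gives back `A`; every other term commutes, reaches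
across `k₁` rows, or produces a product of the first kind. The other orientation follows from the
reflection `p ↦ (c - p₁, p₂)`, a symmetry of `H`.
-/

abbrev Operator (L : ℕ) : Type := Matrix (Site L → Fin 2) (Site L → Fin 2) ℂ

namespace PauliOp

def mul : PauliOp → PauliOp → PauliOp
  | I, a => a
  | a, I => a
  | X, X => I
  | X, Y => Z
  | X, Z => Y
  | Y, X => Z
  | Y, Y => I
  | Y, Z => X
  | Z, X => Y
  | Z, Y => X
  | Z, Z => I

instance : Mul PauliOp := ⟨mul⟩

theorem mul_def (a b : PauliOp) : a * b = mul a b := rfl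

instance : CommMagma PauliOp where
  mul_comm a b := by cases a <;> cases b <;> rfl

def phase : PauliOp → PauliOp → ℂ
  | X, Y => Complex.I
  | Y, X => -Complex.I
  | Y, Z => Complex.I
  | Z, Y => -Complex.I
  | Z, X => Complex.I
  | X, Z => -Complex.I
  | _, _ => 1

theorem pauliMat_mul (a b : PauliOp) :
    pauliMat a * pauliMat b = phase a b • pauliMat (a * b) := by
  cases a <;> cases b <;>
    · ext i j
      fin_cases i <;> fin_cases j <;>
        simp [pauliMat, phase, mul_def, mul, Matrix.mul_apply, Fin.sum_univ_two, Matrix.one_apply]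

@[simp] theorem I_mul (a : PauliOp) : I * a = a := by cases a <;> rfl

@[simp] theorem mul_I (a : PauliOp) : a * I = a := by cases a <;> rfl

@[simp] theorem mul_mul_cancel_right (a b : PauliOp) : a * b * b = a := by
  cases a <;> cases b <;> rfl

@[simp] theorem mul_eq_I_iff {a b : PauliOp} : a * b = I ↔ a = b := by
  cases a <;> cases b <;> decide

theorem phase_ne_zero (a b : PauliOp) : phase a b ≠ 0 := by
  cases a <;> cases b <;> simp [phase]

theorem phase_comm_of_commute {a b : PauliOp} (h : a = I ∨ b = I ∨ a = b) :
    phase b a = phase a b := by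
  cases a <;> cases b <;> simp_all [phase]

theorem phase_anticomm {a b : PauliOp} (ha : a ≠ I) (hb : b ≠ I) (hab : a ≠ b) :
    phase b a = -phase a b := by
  cases a <;> cases b <;> simp_all [phase]

end PauliOp

open PauliOp

noncomputable def pauliPhase [NeZero L] (A B : Site L → PauliOp) : ℂ :=
  ∏ p, phase (A p) (B p)

def PauliCommute [NeZero L] (A B : Site L → PauliOp) : Prop := pauliPhase A B = pauliPhase B A

section PauliProducts

variable [NeZero L]

theorem pauliProd_mul (A B : Site L → PauliOp) :
    pauliProd A * pauliProd B = pauliPhase A B • pauliProd (A * B) := by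
  ext s t
  simp only [Matrix.mul_apply, pauliProd, Matrix.smul_apply, smul_eq_mul, pauliPhase,
    ← Finset.prod_mul_distrib, Pi.mul_apply]
  rw [← Fintype.prod_sum (fun p j => pauliMat (A p) (s p) j * pauliMat (B p) j (t p))]
  refine Finset.prod_congr rfl fun p _ => ?_
  simpa [Matrix.mul_apply] using congrFun (congrFun (pauliMat_mul (A p) (B p)) (s p)) (t p)

theorem pauliCommute_of_forall {A B : Site L → PauliOp}
    (h : ∀ p, A p = I ∨ B p = I ∨ A p = B p) : PauliCommute A B :=
  Finset.prod_congr rfl fun p _ => (phase_comm_of_commute (h p)).symm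

theorem not_pauliCommute_of_anticommute_at {A B : Site L → PauliOp} (p₀ : Site L)
    (hA : A p₀ ≠ I) (hB : B p₀ ≠ I) (hAB : A p₀ ≠ B p₀)
    (h : ∀ p ≠ p₀, A p = I ∨ B p = I ∨ A p = B p) : ¬PauliCommute A B := by
  have hswap : pauliPhase B A = -pauliPhase A B := by
    rw [pauliPhase, pauliPhase, ← Finset.prod_mul_prod_compl {p₀},
      ← Finset.prod_mul_prod_compl {p₀} (fun p => phase (A p) (B p))]
    simp only [Finset.prod_singleton, phase_anticomm hA hB hAB, neg_mul]
    congr 2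
    exact Finset.prod_congr rfl fun p hp => phase_comm_of_commute (h p (by simpa using hp))
  have hne : pauliPhase A B ≠ 0 := Finset.prod_ne_zero_iff.2 fun p _ => phase_ne_zero _ _
  rw [PauliCommute, hswap]
  intro heq
  exact hne (by linear_combination heq / 2)

theorem coeff_sum {ι : Type*} (s : Finset ι) (M : ι → Operator L) (A : Site L → PauliOp) :
    coeff (∑ i ∈ s, M i) A = ∑ i ∈ s, coeff (M i) A := by
  simp [coeff, Matrix.mul_sum, Matrix.trace_sum, Finset.sum_div]

theorem coeff_smul (c : ℂ) (M : Operator L) (A : Site L → PauliOp) :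
    coeff (c • M) A = c * coeff M A := by
  simp [coeff, mul_div_assoc]

theorem coeff_commutator_pauliProd (Q : Operator L) (h B : Site L → PauliOp) :
    coeff (Q * pauliProd h - pauliProd h * Q) B
      = (pauliPhase h B - pauliPhase B h) * coeff Q (B * h) := by
  have hQh : (pauliProd B * (Q * pauliProd h)).trace
      = pauliPhase h B * (pauliProd (B * h) * Q).trace := by
    rw [← Matrix.mul_assoc, Matrix.trace_mul_comm, ← Matrix.mul_assoc, pauliProd_mul,
      mul_comm h B, Matrix.smul_mul, Matrix.trace_smul, smul_eq_mul]
  have hhQ : (pauliProd B * (pauliProd h * Q)).trace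
      = pauliPhase B h * (pauliProd (B * h) * Q).trace := by
    rw [← Matrix.mul_assoc, pauliProd_mul, Matrix.smul_mul, Matrix.trace_smul, smul_eq_mul]
  simp only [coeff, Matrix.mul_sub, Matrix.trace_sub, hQh, hhQ]
  ring

end PauliProducts

inductive TermKind : Type
  | zzVert
  | zzHoriz
  | fieldX
  | fieldZ
  deriving DecidableEq

open TermKind

instance : Fintype TermKind :=
  ⟨{zzVert, zzHoriz, fieldX, fieldZ}, fun κ => by cases κ <;> simp⟩

def hamTerm : TermKind → Site L → Site L → PauliOp
  | zzVert, r => twoSiteZZ r (r.1 + 1, r.2)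
  | zzHoriz, r => twoSiteZZ r (r.1, r.2 + 1)
  | fieldX, r => singleSite r X
  | fieldZ, r => singleSite r Z

def hamWeight (J1 J2 hx hz : ℝ) : TermKind → ℝ
  | zzVert => J1
  | zzHoriz => J2
  | fieldX => hx
  | fieldZ => hz

theorem hamTerm_eq_Z_or_I {κ : TermKind} (hκ : κ ≠ fieldX) (r p : Site L) :
    hamTerm κ r p = Z ∨ hamTerm κ r p = I := by
  cases κ <;> simp only [hamTerm, twoSiteZZ, singleSite] <;> split_ifs <;> simp_all

theorem hamTerm_apply_self {κ : TermKind} (hκ : κ ≠ fieldX) (r : Site L) :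
    hamTerm κ r r = Z := by
  cases κ <;> simp_all [hamTerm, twoSiteZZ, singleSite]

theorem row_eq_of_hamTerm_ne_I {κ : TermKind} {r p : Site L} (h : hamTerm κ r p ≠ I) :
    p.1 = r.1 ∨ (κ = zzVert ∧ p = (r.1 + 1, r.2)) := by
  cases κ <;> simp only [hamTerm, twoSiteZZ, singleSite] at h <;> split_ifs at h with hp <;>
    aesop

section Commutator

variable [NeZero L] {J1 J2 hx hz : ℝ} {Q : Operator L}

theorem ham_eq_sum_hamTerm (J1 J2 hx hz : ℝ) :
    ham J1 J2 hx hz = ∑ x : Site L × TermKind,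
      (hamWeight J1 J2 hx hz x.2 : ℂ) • pauliProd (hamTerm x.2 x.1) := by
  rw [Fintype.sum_prod_type]
  refine Finset.sum_congr rfl fun r _ => ?_
  simp [Finset.univ, Fintype.elems, hamWeight, hamTerm, add_assoc]

theorem sum_hamWeight_mul_coeff_eq_zero
    (hcomm : Q * ham J1 J2 hx hz = ham J1 J2 hx hz * Q) (B : Site L → PauliOp) :
    ∑ x : Site L × TermKind, (hamWeight J1 J2 hx hz x.2 : ℂ) *
      ((pauliPhase (hamTerm x.2 x.1) B - pauliPhase B (hamTerm x.2 x.1))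
        * coeff Q (B * hamTerm x.2 x.1)) = 0 := by
  have h0 : coeff (Q * ham J1 J2 hx hz - ham J1 J2 hx hz * Q) B = 0 := by
    simp [hcomm, coeff]
  rw [ham_eq_sum_hamTerm, Matrix.mul_sum, Matrix.sum_mul, ← Finset.sum_sub_distrib,
    coeff_sum] at h0
  simpa only [Matrix.mul_smul, Matrix.smul_mul, ← smul_sub, coeff_smul,
    coeff_commutator_pauliProd] using h0

theorem coeff_mul_hamTerm_eq_zero_of_unique
    (hcomm : Q * ham J1 J2 hx hz = ham J1 J2 hx hz * Q) (B : Site L → PauliOp)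
    (r₀ : Site L) (κ₀ : TermKind) (hw : hamWeight J1 J2 hx hz κ₀ ≠ 0)
    (hnc : ¬PauliCommute (hamTerm κ₀ r₀) B)
    (hother : ∀ r κ, (r, κ) ≠ (r₀, κ₀) →
      PauliCommute (hamTerm κ r) B ∨ coeff Q (B * hamTerm κ r) = 0) :
    coeff Q (B * hamTerm κ₀ r₀) = 0 := by
  have hsum := sum_hamWeight_mul_coeff_eq_zero hcomm B
  rw [Finset.sum_eq_single_of_mem (r₀, κ₀) (Finset.mem_univ _)] at hsum
  · rcases mul_eq_zero.1 hsum with h | h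
    · exact absurd (Complex.ofReal_eq_zero.1 h) hw
    · exact (mul_eq_zero.1 h).resolve_left (sub_ne_zero.2 hnc)
  · rintro ⟨r, κ⟩ - hne
    rcases hother r κ hne with h | h
    · rw [show pauliPhase _ _ = _ from h, sub_self, zero_mul, mul_zero]
    · rw [h, mul_zero, mul_zero]

end Commutator

/-- The offset of the row `a` below the row `u`, as a natural number in `[0, L)`. -/
def rowOffset (u a : ZMod L) : ℕ := (a - u).val

theorem rowOffset_self (u : ZMod L) : rowOffset u u = 0 := by simp [rowOffset]

theorem ne_of_rowOffset_ne (u : ZMod L) {p q : Site L}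
    (h : rowOffset u p.1 ≠ rowOffset u q.1) : p ≠ q :=
  fun e => h (e ▸ rfl)

section Rows

variable [NeZero L] {u a b : ZMod L}

theorem rowOffset_lt (u a : ZMod L) : rowOffset u a < L := ZMod.val_lt _

theorem rowOffset_eq_iff {n : ℕ} (hn : n < L) : rowOffset u a = n ↔ a = u + n := by
  rw [rowOffset, ← sub_eq_iff_eq_add']
  constructor
  · rintro rfl
    exact (ZMod.natCast_zmod_val _).symm
  · intro h
    rw [h, ZMod.val_natCast_of_lt hn]

theorem rowOffset_sub_one (u : ZMod L) : rowOffset u (u - 1) = L - 1 := by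
  rw [rowOffset_eq_iff (Nat.sub_lt (NeZero.pos L) one_pos), Nat.cast_pred (NeZero.pos L),
    ZMod.natCast_self]
  ring

theorem eq_add_of_rowOffset {k : ℕ}
    (h : rowOffset u a + k = rowOffset u b ∨ rowOffset u a + k = rowOffset u b + L) :
    b = a + k := by
  have hcast : ((rowOffset u a + k : ℕ) : ZMod L) = (rowOffset u b : ZMod L) := by
    rcases h with h | h <;> simp [h]
  simp only [rowOffset, Nat.cast_add, ZMod.natCast_zmod_val] at hcast
  linear_combination -hcast

theorem rowOffset_add_one (u a : ZMod L) :
    (rowOffset u a + 1 < L ∧ rowOffset u (a + 1) = rowOffset u a + 1) ∨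
      (rowOffset u a + 1 = L ∧ rowOffset u (a + 1) = 0) := by
  obtain ⟨n, hn⟩ : ∃ n, rowOffset u a = n := ⟨_, rfl⟩
  have ha : a = u + n := (rowOffset_eq_iff (hn ▸ rowOffset_lt u a)).1 hn
  rw [hn]
  rcases (Nat.succ_le_of_lt (hn ▸ rowOffset_lt u a)).lt_or_eq with h | h
  · refine Or.inl ⟨h, (rowOffset_eq_iff h).2 ?_⟩
    rw [ha]; push_cast; ring
  · refine Or.inr ⟨h, (rowOffset_eq_iff (NeZero.pos L)).2 ?_⟩
    have : (n : ZMod L) + 1 = 0 := by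
      rw [← Nat.cast_succ, h, ZMod.natCast_self]
    rw [ha, add_assoc, this, Nat.cast_zero]

theorem rowOffset_reflect {k : ℕ} (hkL : k ≤ L) (ha : rowOffset u a < k) :
    rowOffset u (u + u + ((k - 1 : ℕ) : ZMod L) - a) = k - 1 - rowOffset u a := by
  have ha' : a = u + (rowOffset u a : ℕ) := (rowOffset_eq_iff (rowOffset_lt u a)).1 rfl
  rw [rowOffset_eq_iff (by omega)]
  conv_lhs => rw [ha']
  rw [Nat.cast_sub (by omega : rowOffset u a ≤ k - 1)]
  ring

end Rows

def SupportedInRows (A : Site L → PauliOp) (u : ZMod L) (k : ℕ) : Prop :=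
  ∀ p, A p ≠ I → rowOffset u p.1 < k

theorem SupportedInRows.apply_eq_I {A : Site L → PauliOp} {u : ZMod L} {k : ℕ}
    (hA : SupportedInRows A u k) {p : Site L} (hp : k ≤ rowOffset u p.1) : A p = I :=
  by_contra fun h => absurd (hA p h) (by omega)

theorem SupportedInRows.mul {A B : Site L → PauliOp} {u : ZMod L} {k : ℕ}
    (hA : SupportedInRows A u k) (hB : SupportedInRows B u k) : SupportedInRows (A * B) u k :=
  fun p hp => by
    by_cases hAp : A p = I
    · exact hB p (by simpa [hAp] using hp)
    · exact hA p hAp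

theorem SupportedInRows.update {A : Site L → PauliOp} {u : ZMod L} {k : ℕ}
    (hA : SupportedInRows A u k) {q : Site L} (hq : rowOffset u q.1 < k) (P : PauliOp) :
    SupportedInRows (Function.update A q P) u k := fun p hp => by
  by_cases hpq : p = q
  · rwa [hpq]
  · exact hA p (by rwa [Function.update_of_ne hpq] at hp)

def VanishesOnRowGap [NeZero L] (k : ℕ) (Q : Operator L) : Prop :=
  ∀ (M : Site L → PauliOp) (s t : Site L), M s ≠ I → M t ≠ I → t.1 = s.1 + k → coeff Q M = 0

theorem IsCandidate.vanishesOnRowGap [NeZero L] {J1 J2 hx hz : ℝ} {k : ℕ} {Q : Operator L}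
    (hQ : IsCandidate J1 J2 hx hz k Q) (hkL : 2 * k ≤ L) : VanishesOnRowGap k Q := by
  intro M s t hs ht hst
  by_contra hc
  obtain ⟨ℓ₁, ℓ₂, hℓ₁, -, c, hbox, -⟩ := hQ.2 M hc
  obtain ⟨⟨ns, hns, hs1⟩, -⟩ := hbox s hs
  obtain ⟨⟨nt, hnt, ht1⟩, -⟩ := hbox t ht
  have hns' : rowOffset c.1 t.1 = ns + k := by
    rw [rowOffset_eq_iff (by omega), hst, hs1]
    push_cast; ring
  have hnt' : rowOffset c.1 t.1 = nt := (rowOffset_eq_iff (by omega)).2 ht1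
  omega

theorem VanishesOnRowGap.coeff_eq_zero [NeZero L] {k : ℕ} {Q : Operator L}
    (hgap : VanishesOnRowGap k Q) {M : Site L → PauliOp} (u : ZMod L) {s t : Site L}
    (hs : M s ≠ I) (ht : M t ≠ I)
    (h : rowOffset u s.1 + k = rowOffset u t.1 ∨ rowOffset u s.1 + k = rowOffset u t.1 + L) :
    coeff Q M = 0 :=
  hgap M s t hs ht (eq_add_of_rowOffset h)

def above (p : Site L) : Site L := (p.1 - 1, p.2)

theorem above_fst_add_one (p : Site L) : ((above p).1 + 1, (above p).2) = p := by
  simp [above]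

theorem rowOffset_above [NeZero L] {u : ZMod L} {p : Site L} (hp : p.1 = u) :
    rowOffset u (above p).1 = L - 1 :=
  hp ▸ rowOffset_sub_one _

def withZAbove (D : Site L → PauliOp) (p : Site L) : Site L → PauliOp :=
  Function.update (Function.update D p (D p * Z)) (above p) Z

theorem withZAbove_apply_above (D : Site L → PauliOp) (p : Site L) :
    withZAbove D p (above p) = Z :=
  Function.update_self ..

theorem withZAbove_apply_of_ne {D : Site L → PauliOp} {p q : Site L}
    (h₁ : q ≠ above p) (h₂ : q ≠ p) : withZAbove D p q = D q :=
  (Function.update_of_ne h₁ _ _).trans (Function.update_of_ne h₂ _ _)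

theorem withZAbove_mul_hamTerm {D : Site L → PauliOp} {p : Site L} (hp : p ≠ above p)
    (hD : D (above p) = I) : withZAbove D p * hamTerm zzVert (above p) = D := by
  funext q
  simp only [Pi.mul_apply, withZAbove, hamTerm, above_fst_add_one, twoSiteZZ]
  by_cases h₁ : q = above p
  · subst h₁; simp [hD]
  by_cases h₂ : q = p
  · subst h₂; simp [h₁]
  · simp [h₁, h₂]

section XYEdges

variable [NeZero L] {J1 J2 hx hz : ℝ} {k : ℕ} {Q : Operator L}

theorem not_pauliCommute_withZAbove {D : Site L → PauliOp} {p : Site L}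
    (hp : p ≠ above p) (hXY : D p = X ∨ D p = Y) :
    ¬PauliCommute (hamTerm zzVert (above p)) (withZAbove D p) := by
  have hBp : withZAbove D p p = D p * Z := by simp [withZAbove, hp]
  have hhp : hamTerm zzVert (above p) p = Z := by simp [hamTerm, above_fst_add_one, twoSiteZZ]
  refine not_pauliCommute_of_anticommute_at p (by rw [hhp]; decide) ?_ ?_ fun q hq => ?_
  · rw [hBp]; rcases hXY with e | e <;> rw [e] <;> decide
  · rw [hBp, hhp]; rcases hXY with e | e <;> rw [e] <;> decide
  · by_cases h₁ : q = above p
    · subst h₁; simp [withZAbove, hamTerm, twoSiteZZ]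
    · left; simp [hamTerm, above_fst_add_one, twoSiteZZ, h₁, hq]

theorem pauliCommute_or_coeff_eq_zero_withZAbove_fieldX (hgap : VanishesOnRowGap k Q)
    (hk : 2 ≤ k) (hkL : k + 2 ≤ L) {D : Site L → PauliOp} {u : ZMod L} {pm py : Site L}
    (hpm : pm.1 = u) (hpy : rowOffset u py.1 = k - 1) (hpyXY : D py = X ∨ D py = Y)
    (r : Site L) :
    PauliCommute (hamTerm fieldX r) (withZAbove D pm) ∨
      coeff Q (withZAbove D pm * hamTerm fieldX r) = 0 := by
  have ho₀ := rowOffset_above hpm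
  have hopm : rowOffset u pm.1 = 0 := hpm ▸ rowOffset_self _
  have hBpy : withZAbove D pm py = D py :=
    withZAbove_apply_of_ne (ne_of_rowOffset_ne u (by omega)) (ne_of_rowOffset_ne u (by omega))
  by_cases hc : r = py ∧ D py = X
  · refine Or.inl (pauliCommute_of_forall fun p => ?_)
    by_cases hp : p = r
    · simp [hamTerm, singleSite, hp, hc.1, hBpy, hc.2]
    · simp [hamTerm, singleSite, hp]
  refine Or.inr (hgap.coeff_eq_zero u (s := above pm) (t := py) ?_ ?_ (Or.inr (by omega)))
  · rw [Pi.mul_apply, withZAbove_apply_above]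
    simp only [hamTerm, singleSite]; split_ifs <;> decide
  · by_cases hp : py = r
    · subst hp
      simp [hamTerm, singleSite, hBpy, hpyXY.resolve_left (by tauto)]
    · simp only [Pi.mul_apply, hamTerm, singleSite, if_neg hp, hBpy, mul_I]
      rcases hpyXY with e | e <;> rw [e] <;> decide

theorem pauliCommute_hamTerm_zzVert_withZAbove (hk : 2 ≤ k) (hkL : k + 2 ≤ L)
    {D : Site L → PauliOp} {u : ZMod L} (hD : SupportedInRows D u k) {pm : Site L}
    (hpm : pm.1 = u) {r : Site L} (hr : (r.1 + 1, r.2) = above pm) :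
    PauliCommute (hamTerm zzVert r) (withZAbove D pm) := by
  have ho₀ := rowOffset_above hpm
  have hopm : rowOffset u pm.1 = 0 := hpm ▸ rowOffset_self _
  have ho₁ : rowOffset u (r.1 + 1) = L - 1 := by rw [← ho₀, ← hr]
  have hor : rowOffset u r.1 = L - 2 := by
    rcases rowOffset_add_one u r.1 with ⟨-, e⟩ | ⟨-, e⟩ <;> omega
  have hBr : withZAbove D pm r = I :=
    (withZAbove_apply_of_ne (ne_of_rowOffset_ne u (by omega))
      (ne_of_rowOffset_ne u (by omega))).trans (hD.apply_eq_I (by omega))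
  refine pauliCommute_of_forall fun p => ?_
  by_cases hp : p = above pm
  · rw [hp, withZAbove_apply_above, ← hr]; simp [hamTerm, twoSiteZZ]
  by_cases hp' : p = r
  · rw [hp']; exact Or.inr (Or.inl hBr)
  · left; simp only [hamTerm, twoSiteZZ]; rw [hr]; simp [hp, hp']

theorem pauliCommute_or_coeff_eq_zero_withZAbove_of_ne_fieldX (hgap : VanishesOnRowGap k Q)
    (hk : 2 ≤ k) (hkL : k + 2 ≤ L) {D : Site L → PauliOp} {u : ZMod L}
    (hD : SupportedInRows D u k) {pm py : Site L} (hpm : pm.1 = u)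
    (hpy : rowOffset u py.1 = k - 1) (hpyXY : D py = X ∨ D py = Y)
    {r : Site L} {κ : TermKind} (hκ : κ ≠ fieldX) (hne : (r, κ) ≠ (above pm, zzVert)) :
    PauliCommute (hamTerm κ r) (withZAbove D pm) ∨
      coeff Q (withZAbove D pm * hamTerm κ r) = 0 := by
  have ho₀ := rowOffset_above hpm
  have hopm : rowOffset u pm.1 = 0 := hpm ▸ rowOffset_self _
  have hBr₀ := withZAbove_apply_above D pm
  have hBrow : ∀ s, rowOffset u s.1 = L - 1 → s ≠ above pm → withZAbove D pm s = I :=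
    fun s hs hsr => (withZAbove_apply_of_ne hsr (ne_of_rowOffset_ne u (by omega))).trans
      (hD.apply_eq_I (by omega))
  have hBpy : withZAbove D pm py ≠ hamTerm κ r py := by
    rw [withZAbove_apply_of_ne (ne_of_rowOffset_ne u (by omega))
      (ne_of_rowOffset_ne u (by omega))]
    rcases hamTerm_eq_Z_or_I hκ r py with e | e <;> rw [e] <;>
      rcases hpyXY with e' | e' <;> rw [e'] <;> decide
  -- the product acts on the row above the window and on the lower edge, `k` rows apart
  have hkill : ∀ s, rowOffset u s.1 = L - 1 → withZAbove D pm s ≠ hamTerm κ r s →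
      coeff Q (withZAbove D pm * hamTerm κ r) = 0 := fun s hs h₁ =>
    hgap.coeff_eq_zero u (t := py) (by simpa using h₁) (by simpa using hBpy) (Or.inr (by omega))
  have hhr := hamTerm_apply_self hκ r
  by_cases h0 : hamTerm κ r (above pm) = I
  · exact Or.inr (hkill _ ho₀ (by rw [hBr₀, h0]; decide))
  rcases row_eq_of_hamTerm_ne_I h0 with hrow | ⟨rfl, hr₀r⟩
  · have hor : rowOffset u r.1 = L - 1 := hrow ▸ ho₀
    by_cases hrr : r = above pm
    · cases κ with
      | zzVert => exact absurd (by rw [hrr]) hne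
      | fieldX => exact absurd rfl hκ
      | zzHoriz =>
        have : Fact (1 < L) := ⟨by omega⟩
        have hs : (r.1, r.2 + 1) ≠ above pm := fun e => by
          simpa [← hrr] using congrArg Prod.snd e
        refine Or.inr (hkill (r.1, r.2 + 1) hor ?_)
        rw [hBrow (r.1, r.2 + 1) hor hs]
        simp [hamTerm, twoSiteZZ]
      | fieldZ =>
        refine Or.inl (pauliCommute_of_forall fun p => ?_)
        by_cases hp : p = r
        · right; right; rw [hp, hrr, hBr₀]; simp [hamTerm, singleSite]
        · left; simp [hamTerm, singleSite, hp]
    · exact Or.inr (hkill r hor (by rw [hBrow r hor hrr, hhr]; decide))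
  · exact Or.inl (pauliCommute_hamTerm_zzVert_withZAbove hk hkL hD hpm hr₀r.symm)

theorem coeff_eq_zero_of_XY_on_both_edges (hcomm : Q * ham J1 J2 hx hz = ham J1 J2 hx hz * Q)
    (hgap : VanishesOnRowGap k Q) (hJ1 : J1 ≠ 0) (hk : 2 ≤ k) (hkL : k + 2 ≤ L)
    {D : Site L → PauliOp} {u : ZMod L} (hD : SupportedInRows D u k) {pm py : Site L}
    (hpm : pm.1 = u) (hpmXY : D pm = X ∨ D pm = Y)
    (hpy : rowOffset u py.1 = k - 1) (hpyXY : D py = X ∨ D py = Y) : coeff Q D = 0 := by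
  have ho₀ := rowOffset_above hpm
  have hopm : rowOffset u pm.1 = 0 := hpm ▸ rowOffset_self _
  have hpm₀ : pm ≠ above pm := ne_of_rowOffset_ne u (by omega)
  have hother : ∀ r κ, (r, κ) ≠ (above pm, zzVert) →
      PauliCommute (hamTerm κ r) (withZAbove D pm) ∨
        coeff Q (withZAbove D pm * hamTerm κ r) = 0 := fun r κ hne => by
    by_cases hκ : κ = fieldX
    · subst hκ
      exact pauliCommute_or_coeff_eq_zero_withZAbove_fieldX hgap hk hkL hpm hpy hpyXY r
    · exact pauliCommute_or_coeff_eq_zero_withZAbove_of_ne_fieldX hgap hk hkL hD hpm hpy hpyXY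
        hκ hne
  have := coeff_mul_hamTerm_eq_zero_of_unique hcomm _ _ zzVert hJ1
    (not_pauliCommute_withZAbove hpm₀ hpmXY) hother
  rwa [withZAbove_mul_hamTerm hpm₀ (hD.apply_eq_I (by omega))] at this

end XYEdges

section XZEdges

variable [NeZero L] {J1 J2 hx hz : ℝ} {k : ℕ} {Q : Operator L}

theorem coeff_update_Y_mul_eq_zero_of_supportedInRows
    (hcomm : Q * ham J1 J2 hx hz = ham J1 J2 hx hz * Q) (hgap : VanishesOnRowGap k Q)
    (hJ1 : J1 ≠ 0) (hk : 2 ≤ k) (hkL : k + 2 ≤ L) {A : Site L → PauliOp} {u : ZMod L}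
    (hA : SupportedInRows A u k) {px q : Site L} (hpx : px.1 = u) (hpxX : A px = X)
    (hq : rowOffset u q.1 = k - 1) {h : Site L → PauliOp} (hh : SupportedInRows h u k)
    (hhpx : h px = Z ∨ h px = I) (hhq : h q = Z ∨ h q = I) :
    coeff Q (Function.update A q Y * h) = 0 := by
  have hpxq : px ≠ q := ne_of_rowOffset_ne u (by rw [hpx, rowOffset_self]; omega)
  refine coeff_eq_zero_of_XY_on_both_edges hcomm hgap hJ1 hk hkL
    ((hA.update (by omega) Y).mul hh) hpx ?_ hq ?_
  · rcases hhpx with e | e <;> simp [Function.update_of_ne hpxq, hpxX, e, mul_def, mul]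
  · rcases hhq with e | e <;> simp [e, mul_def, mul]

theorem pauliCommute_or_coeff_eq_zero_update_Y_fieldX
    (hcomm : Q * ham J1 J2 hx hz = ham J1 J2 hx hz * Q) (hgap : VanishesOnRowGap k Q)
    (hJ1 : J1 ≠ 0) (hk : 2 ≤ k) (hkL : k + 2 ≤ L) {A : Site L → PauliOp} {u : ZMod L}
    (hA : SupportedInRows A u k) {px q : Site L} (hpx : px.1 = u) (hpxX : A px = X)
    (hq : rowOffset u q.1 = k - 1) {r : Site L} (hrq : r ≠ q) :
    PauliCommute (hamTerm fieldX r) (Function.update A q Y) ∨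
      coeff Q (Function.update A q Y * hamTerm fieldX r) = 0 := by
  have hpxq : px ≠ q := ne_of_rowOffset_ne u (by rw [hpx, rowOffset_self]; omega)
  by_cases hc : r = px ∨ k ≤ rowOffset u r.1
  · refine Or.inl (pauliCommute_of_forall fun p => ?_)
    by_cases hp : p = r
    · subst hp
      rcases hc with rfl | hc
      · simp [hamTerm, singleSite, Function.update_of_ne hpxq, hpxX]
      · exact Or.inr (Or.inl ((hA.update (q := q) (by omega) Y).apply_eq_I hc))
    · simp [hamTerm, singleSite, hp]
  simp only [not_or, not_le] at hc
  refine Or.inr (coeff_update_Y_mul_eq_zero_of_supportedInRows hcomm hgap hJ1 hk hkL hA hpx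
    hpxX hq (fun p hp => ?_) (Or.inr ?_) (Or.inr ?_))
  · rcases row_eq_of_hamTerm_ne_I hp with e | ⟨⟨⟩, -⟩
    rw [e]; exact hc.2
  · simp [hamTerm, singleSite, Ne.symm hc.1]
  · simp [hamTerm, singleSite, Ne.symm hrq]

theorem pauliCommute_or_coeff_eq_zero_update_Y_of_ne_fieldX
    (hcomm : Q * ham J1 J2 hx hz = ham J1 J2 hx hz * Q) (hgap : VanishesOnRowGap k Q)
    (hJ1 : J1 ≠ 0) (hk : 2 ≤ k) (hkL : k + 2 ≤ L) {A : Site L → PauliOp} {u : ZMod L}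
    (hA : SupportedInRows A u k) {px q : Site L} (hpx : px.1 = u) (hpxX : A px = X)
    (hq : rowOffset u q.1 = k - 1) {r : Site L} {κ : TermKind} (hκ : κ ≠ fieldX) :
    PauliCommute (hamTerm κ r) (Function.update A q Y) ∨
      coeff Q (Function.update A q Y * hamTerm κ r) = 0 := by
  have hopx : rowOffset u px.1 = 0 := hpx ▸ rowOffset_self _
  have hpxq : px ≠ q := ne_of_rowOffset_ne u (by omega)
  have hC := hA.update (by omega : rowOffset u q.1 < k) Y
  have hZI := hamTerm_eq_Z_or_I hκ r
  have hChpx : (Function.update A q Y * hamTerm κ r) px ≠ I := by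
    rcases hZI px with e | e <;> simp [Function.update_of_ne hpxq, hpxX, e]
  have hChq : (Function.update A q Y * hamTerm κ r) q ≠ I := by
    rcases hZI q with e | e <;> simp [e]
  have hChZ : ∀ p, k ≤ rowOffset u p.1 → hamTerm κ r p = Z →
      (Function.update A q Y * hamTerm κ r) p ≠ I := fun p hp e => by
    simp [hC.apply_eq_I hp, e]
  have hhr := hamTerm_apply_self hκ r
  have hr1 := rowOffset_add_one u r.1
  -- next to the window the product spans `k` rows, inside it is of the first kind,
  -- and farther away the term commutes
  by_cases hn1 : rowOffset u r.1 = L - 1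
  · exact Or.inr (hgap.coeff_eq_zero u (hChZ r (by omega) hhr) hChq (Or.inr (by omega)))
  by_cases hnk : rowOffset u r.1 = k
  · exact Or.inr (hgap.coeff_eq_zero u hChpx (hChZ r (by omega) hhr) (Or.inl (by omega)))
  by_cases hlt : rowOffset u r.1 < k
  · by_cases hv : κ = zzVert ∧ rowOffset u r.1 = k - 1
    · obtain ⟨rfl, hv⟩ := hv
      have hs : hamTerm zzVert r (r.1 + 1, r.2) = Z := by simp [hamTerm, twoSiteZZ]
      exact Or.inr (hgap.coeff_eq_zero u (t := (r.1 + 1, r.2)) hChpx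
        (hChZ _ (by simp only; omega) hs) (Or.inl (by simp only; omega)))
    · refine Or.inr (coeff_update_Y_mul_eq_zero_of_supportedInRows hcomm hgap hJ1 hk hkL hA
        hpx hpxX hq (fun p hp => ?_) (hZI px) (hZI q))
      rcases row_eq_of_hamTerm_ne_I hp with e | ⟨rfl, rfl⟩
      · rw [e]; exact hlt
      · have : rowOffset u r.1 ≠ k - 1 := fun e => hv ⟨rfl, e⟩
        simp only; omega
  · refine Or.inl (pauliCommute_of_forall fun p => ?_)
    by_cases hp : hamTerm κ r p = I
    · exact Or.inl hp
    · refine Or.inr (Or.inl (hC.apply_eq_I ?_))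
      rcases row_eq_of_hamTerm_ne_I hp with e | ⟨rfl, rfl⟩
      · rw [e]; omega
      · simp only; omega

theorem coeff_eq_zero_of_X_on_upper_edge_of_Z_on_lower_edge
    (hcomm : Q * ham J1 J2 hx hz = ham J1 J2 hx hz * Q) (hgap : VanishesOnRowGap k Q)
    (hJ1 : J1 ≠ 0) (hhx : hx ≠ 0) (hk : 2 ≤ k) (hkL : k + 2 ≤ L) {A : Site L → PauliOp}
    {u : ZMod L} (hA : SupportedInRows A u k) {px q : Site L} (hpx : px.1 = u)
    (hpxX : A px = X) (hq : rowOffset u q.1 = k - 1) (hqZ : A q = Z) : coeff Q A = 0 := by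
  have hprod : Function.update A q Y * hamTerm fieldX q = A := by
    funext p
    by_cases hp : p = q
    · subst hp; simp [hamTerm, singleSite, hqZ, mul_def, mul]
    · simp [hamTerm, singleSite, hp]
  have hnc : ¬PauliCommute (hamTerm fieldX q) (Function.update A q Y) :=
    not_pauliCommute_of_anticommute_at q (by simp [hamTerm, singleSite]) (by simp)
      (by simp [hamTerm, singleSite]) fun p hp => Or.inl (by simp [hamTerm, singleSite, hp])
  have hother : ∀ r κ, (r, κ) ≠ (q, fieldX) →
      PauliCommute (hamTerm κ r) (Function.update A q Y) ∨
        coeff Q (Function.update A q Y * hamTerm κ r) = 0 := fun r κ hne => by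
    by_cases hκ : κ = fieldX
    · subst hκ
      exact pauliCommute_or_coeff_eq_zero_update_Y_fieldX hcomm hgap hJ1 hk hkL hA hpx hpxX hq
        fun e => hne (by rw [e])
    · exact pauliCommute_or_coeff_eq_zero_update_Y_of_ne_fieldX hcomm hgap hJ1 hk hkL hA hpx
        hpxX hq hκ
  have := coeff_mul_hamTerm_eq_zero_of_unique hcomm _ q fieldX hhx hnc hother
  rwa [hprod] at this

end XZEdges

def reflectRows (c : ZMod L) : Site L ≃ Site L :=
  Function.Involutive.toPerm (fun p => (c - p.1, p.2)) fun p => by simp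

theorem reflectRows_symm (c : ZMod L) : (reflectRows c).symm = reflectRows c :=
  Function.Involutive.toPerm_symm _

theorem reflectRows_apply (c : ZMod L) (p : Site L) : reflectRows c p = (c - p.1, p.2) := rfl

theorem twoSiteZZ_comp (σ : Site L ≃ Site L) (a b : Site L) :
    twoSiteZZ a b ∘ σ = twoSiteZZ (σ.symm a) (σ.symm b) := by
  funext p
  simp only [Function.comp_apply, twoSiteZZ, ← Equiv.eq_symm_apply]

theorem singleSite_comp (σ : Site L ≃ Site L) (a : Site L) (P : PauliOp) :
    singleSite a P ∘ σ = singleSite (σ.symm a) P := by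
  funext p
  simp only [Function.comp_apply, singleSite, ← Equiv.eq_symm_apply]

theorem twoSiteZZ_comm (a b : Site L) : twoSiteZZ a b = twoSiteZZ b a := by
  funext p
  simp only [twoSiteZZ, or_comm]

theorem hamTerm_comp_reflectRows (c : ZMod L) (κ : TermKind) (r : Site L) :
    hamTerm κ r ∘ reflectRows c
      = hamTerm κ (reflectRows (if κ = zzVert then c - 1 else c) r) := by
  cases κ <;> simp only [hamTerm, twoSiteZZ_comp, singleSite_comp, reflectRows_symm,
    reflectRows_apply, if_pos, if_neg, reduceCtorEq, not_false_eq_true]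
  rw [twoSiteZZ_comm]
  congr 2 <;> ring

def spinPerm (σ : Site L ≃ Site L) : (Site L → Fin 2) ≃ (Site L → Fin 2) :=
  σ.arrowCongr (Equiv.refl (Fin 2))

section Reflection

variable [NeZero L]

theorem pauliProd_comp (σ : Site L ≃ Site L) (A : Site L → PauliOp) :
    pauliProd (A ∘ σ) = (pauliProd A).submatrix (spinPerm σ) (spinPerm σ) := by
  ext s t
  simp only [pauliProd, Matrix.submatrix_apply, spinPerm, Equiv.arrowCongr_apply,
    Equiv.coe_refl, Function.comp_apply, id]
  rw [← Equiv.prod_comp σ fun p => pauliMat (A p) (s (σ.symm p)) (t (σ.symm p))]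
  simp only [Equiv.symm_apply_apply]

theorem coeff_submatrix_comp (σ : Site L ≃ Site L) (Q : Operator L) (A : Site L → PauliOp) :
    coeff (Q.submatrix (spinPerm σ) (spinPerm σ)) (A ∘ σ) = coeff Q A := by
  rw [coeff, coeff, pauliProd_comp, Matrix.submatrix_mul_equiv, Matrix.trace, Matrix.trace]
  exact congrArg (· / _) (Equiv.sum_comp _ fun s => (pauliProd A * Q) s s)

theorem ham_submatrix_reflectRows (c : ZMod L) (J1 J2 hx hz : ℝ) :
    (ham J1 J2 hx hz).submatrix (spinPerm (reflectRows c)) (spinPerm (reflectRows c))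
      = ham J1 J2 hx hz := by
  have hsub : ∀ (ι : Type) [Fintype ι] (M : ι → Operator L)
      (e : (Site L → Fin 2) ≃ (Site L → Fin 2)),
      (∑ i, M i).submatrix e e = ∑ i, (M i).submatrix e e := fun _ _ M e => by
    ext s t; simp [Matrix.sum_apply]
  rw [ham_eq_sum_hamTerm, hsub, Fintype.sum_prod_type_right, Fintype.sum_prod_type_right]
  refine Finset.sum_congr rfl fun κ _ => ?_
  simp only [Matrix.submatrix_smul, Pi.smul_apply, ← pauliProd_comp, hamTerm_comp_reflectRows]
  exact Equiv.sum_comp (reflectRows _)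
    fun r => (hamWeight J1 J2 hx hz κ : ℂ) • pauliProd (L := L) (hamTerm κ r)

theorem SupportedInRows.comp_reflectRows {A : Site L → PauliOp} {u : ZMod L} {k : ℕ}
    (hA : SupportedInRows A u k) (hkL : k ≤ L) :
    SupportedInRows (A ∘ reflectRows (u + u + ((k - 1 : ℕ) : ZMod L))) u k := fun p hp => by
  have h := hA _ hp
  rw [reflectRows_apply] at h
  have := rowOffset_reflect (a := u + u + ((k - 1 : ℕ) : ZMod L) - p.1) hkL h
  simp only [sub_sub_cancel] at this
  omega

theorem VanishesOnRowGap.submatrix_reflectRows {k : ℕ} {Q : Operator L}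
    (hgap : VanishesOnRowGap k Q) (c : ZMod L) :
    VanishesOnRowGap k (Q.submatrix (spinPerm (reflectRows c)) (spinPerm (reflectRows c))) := by
  intro M s t hs ht hst
  have hM : M = (M ∘ reflectRows c) ∘ reflectRows c := by
    funext p; simp [reflectRows_apply]
  rw [hM, coeff_submatrix_comp]
  refine hgap _ (reflectRows c t) (reflectRows c s) (by simpa [reflectRows_apply] using ht)
    (by simpa [reflectRows_apply] using hs) ?_
  simp only [reflectRows_apply, hst]
  ring

theorem submatrix_reflectRows_mul_ham {J1 J2 hx hz : ℝ} {Q : Operator L}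
    (hcomm : Q * ham J1 J2 hx hz = ham J1 J2 hx hz * Q) (c : ZMod L) :
    Q.submatrix (spinPerm (reflectRows c)) (spinPerm (reflectRows c)) * ham J1 J2 hx hz
      = ham J1 J2 hx hz * Q.submatrix (spinPerm (reflectRows c)) (spinPerm (reflectRows c)) := by
  set e := spinPerm (reflectRows c)
  calc Q.submatrix e e * ham J1 J2 hx hz
      = Q.submatrix e e * (ham J1 J2 hx hz).submatrix e e := by rw [ham_submatrix_reflectRows]
    _ = (ham J1 J2 hx hz * Q).submatrix e e := by rw [Matrix.submatrix_mul_equiv, hcomm]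
    _ = (ham J1 J2 hx hz).submatrix e e * Q.submatrix e e := (Matrix.submatrix_mul_equiv ..).symm
    _ = ham J1 J2 hx hz * Q.submatrix e e := by rw [ham_submatrix_reflectRows]

end Reflection

theorem coeff_eq_zero_of_X_on_lower_edge_of_Z_on_upper_edge [NeZero L] {J1 J2 hx hz : ℝ}
    {k : ℕ} {Q : Operator L} (hcomm : Q * ham J1 J2 hx hz = ham J1 J2 hx hz * Q)
    (hgap : VanishesOnRowGap k Q)
    (hJ1 : J1 ≠ 0) (hhx : hx ≠ 0) (hk : 2 ≤ k) (hkL : k + 2 ≤ L) {A : Site L → PauliOp}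
    {u : ZMod L} (hA : SupportedInRows A u k) {px q : Site L} (hpx : rowOffset u px.1 = k - 1)
    (hpxX : A px = X) (hq : q.1 = u) (hqZ : A q = Z) : coeff Q A = 0 := by
  set c := u + u + ((k - 1 : ℕ) : ZMod L)
  have hσσ : ∀ p, reflectRows c (reflectRows c p) = p := fun p => by simp [reflectRows_apply]
  have hpx' : px.1 = u + ((k - 1 : ℕ) : ZMod L) := (rowOffset_eq_iff (by omega)).1 hpx
  rw [← coeff_submatrix_comp (reflectRows c) Q A]
  refine coeff_eq_zero_of_X_on_upper_edge_of_Z_on_lower_edge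
    (submatrix_reflectRows_mul_ham hcomm c) (hgap.submatrix_reflectRows c) hJ1 hhx hk hkL
    (hA.comp_reflectRows (by omega)) (px := reflectRows c px) ?_ (by simp [hσσ, hpxX])
    (q := reflectRows c q) ?_ (by simp [hσσ, hqZ])
  · simp only [reflectRows_apply, hpx', c]; ring
  · have := rowOffset_reflect (u := u) (a := u) (k := k) (by omega) (by rw [rowOffset_self]; omega)
    simpa [reflectRows_apply, hq, rowOffset_self] using this

theorem lemma_type_ii_b_with_X_general (L : ℕ) [NeZero L] (J1 J2 hx hz : ℝ)
    (hJ1 : J1 ≠ 0) (hhx : hx ≠ 0)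
    (k₁ : ℕ) (hk₁ : 2 ≤ k₁) (hk₁L : 2 * k₁ ≤ L)
    (Q : Matrix (Site L → Fin 2) (Site L → Fin 2) ℂ)
    (hQ : IsCandidate J1 J2 hx hz k₁ Q)
    (ℓ₂ : ℕ)
    (A : Site L → PauliOp) (r : Site L)
    (hsupp : IsSupportedAt A r k₁ ℓ₂)
    (htype :
      (HasXYOn A (upperEdge r) ∧ AllZIOn A (lowerEdge r k₁) ∧ OneZOn A (lowerEdge r k₁) ∧
        ∃ p : Site L, p.1 = upperEdge r ∧ A p = PauliOp.X)
      ∨ (HasXYOn A (lowerEdge r k₁) ∧ AllZIOn A (upperEdge r) ∧ OneZOn A (upperEdge r) ∧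
        ∃ p : Site L, p.1 = lowerEdge r k₁ ∧ A p = PauliOp.X)) :
    coeff Q A = 0 := by
  have hgap := hQ.vanishesOnRowGap hk₁L
  have hA : SupportedInRows A r.1 k₁ := fun p hp => by
    obtain ⟨n, hn, e⟩ := (hsupp.1 p hp).1
    rw [(rowOffset_eq_iff (by omega)).2 e]
    exact hn
  have hlower : ∀ p : Site L, p.1 = lowerEdge r k₁ → rowOffset r.1 p.1 = k₁ - 1 :=
    fun p => (rowOffset_eq_iff (by omega)).2
  rcases htype with ⟨-, -, ⟨q, ⟨hq, hqZ⟩, -⟩, px, hpx, hpxX⟩ |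
    ⟨-, -, ⟨q, ⟨hq, hqZ⟩, -⟩, px, hpx, hpxX⟩
  · exact coeff_eq_zero_of_X_on_upper_edge_of_Z_on_lower_edge hQ.1 hgap hJ1 hhx hk₁ (by omega)
      hA hpx hpxX (hlower q hq) hqZ
  · exact coeff_eq_zero_of_X_on_lower_edge_of_Z_on_upper_edge hQ.1 hgap hJ1 hhx hk₁ (by omega)
      hA (hlower px hpx) hpxX hq hqZ

/-- **Lemma 1.** Assume `J¹ ≠ 0` and `hˣ ≠ 0`. For `2 ≤ k₁` with `2·k₁ ≤ L` and any
`k₁`-candidate `Q`, the coefficient of `Q` vanishes on every `(k₁,ℓ₂)`-support Pauli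
product of type ii-b that contains the Pauli operator `X` at some site of its
non-`Z` edge. -/
theorem lemma_type_ii_b_with_X (L : ℕ) [NeZero L] (J1 J2 hx hz : ℝ)
    (hJ1 : J1 ≠ 0) (hhx : hx ≠ 0)
    (k₁ : ℕ) (hk₁ : 2 ≤ k₁) (hk₁L : 2 * k₁ ≤ L)
    (Q : Matrix (Site L → Fin 2) (Site L → Fin 2) ℂ)
    (hQ : IsCandidate J1 J2 hx hz k₁ Q)
    (ℓ₂ : ℕ) (hℓ₂1 : 1 ≤ ℓ₂) (hℓ₂L : ℓ₂ ≤ L)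
    (A : Site L → PauliOp) (r : Site L)
    (hsupp : IsSupportedAt A r k₁ ℓ₂)
    (htype :
      (HasXYOn A (upperEdge r) ∧ AllZIOn A (lowerEdge r k₁) ∧ OneZOn A (lowerEdge r k₁) ∧
        ∃ p : Site L, p.1 = upperEdge r ∧ A p = PauliOp.X)
      ∨ (HasXYOn A (lowerEdge r k₁) ∧ AllZIOn A (upperEdge r) ∧ OneZOn A (upperEdge r) ∧
        ∃ p : Site L, p.1 = lowerEdge r k₁ ∧ A p = PauliOp.X)) :
    coeff Q A = 0 :=
  lemma_type_ii_b_with_X_general L J1 J2 hx hz hJ1 hhx k₁ hk₁ hk₁L Q hQ ℓ₂ A r hsupp htype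

end Ising2D
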